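/- arXiv:0912.1559 — 2 statements merged into one kernel-verified Lean document; each statement's English description precedes it below -/
import Mathlib

section
/- Let A be a Schur ring over a finite abelian group G, p a prime dividing |G|, H = {g ∈ G : g^p = 1}, and X a basic set of A. Then the set X^{[p]} = {x^p : x ∈ X, |xH ∩ X| ≢ 0 (mod p)} is an A-set (a union of basic sets of A). -/
open Pointwise

/-- A Schur ring over a finite group `G`, given combinatorially by its partition
into basic sets with constant structure constants. -/
structure SchurRing (G : Type*) [Group G] where
  parts : Set (Set G)
  nonempty : ∀ X ∈ parts, X.Nonempty
  cover : ∀ g : G, ∃ X ∈ parts, g ∈ X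
  disjoint : ∀ X ∈ parts, ∀ Y ∈ parts, X ≠ Y → X ∩ Y = ∅
  one_mem : {1} ∈ parts
  inv_closed : ∀ X ∈ parts, X⁻¹ ∈ parts
  struct_const : ∀ X ∈ parts, ∀ Y ∈ parts, ∀ Z ∈ parts, ∀ z₁ ∈ Z, ∀ z₂ ∈ Z,
    Set.ncard {xy : G × G | xy.1 ∈ X ∧ xy.2 ∈ Y ∧ xy.1 * xy.2 = z₁} =
    Set.ncard {xy : G × G | xy.1 ∈ X ∧ xy.2 ∈ Y ∧ xy.1 * xy.2 = z₂}

/-- A subset of `G` is an `A`-set if it is a union of basic sets of `A`. -/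
def SchurRing.IsASet {G : Type*} [Group G] (A : SchurRing G) (S : Set G) : Prop :=
  ∀ g ∈ S, ∃ X ∈ A.parts, g ∈ X ∧ X ⊆ S

/-!
Over `𝔽_p` the Frobenius map is additive, so `ξ(X)^p = ∑_{x ∈ X} x^p`: the coefficient of `y`
in `ξ(X)^p` is the number of `x ∈ X` with `x^p = y`, which for any such `x` is `|xH ∩ X|`, read
mod `p`. The elements of `𝔽_p[G]` constant on basic sets form a subring, which contains `ξ(X)`
and hence `ξ(X)^p`; so the support of `ξ(X)^p`, which is `X^{[p]}`, is a union of basic sets.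
-/

open Finset MonoidAlgebra

theorem Finset.sum_eq_sum_of_card_fiber_eq {ι κ M : Type*} [AddCommMonoid M] [DecidableEq κ]
    [Fintype κ] {s t : Finset ι} (k : ι → κ) {φ : ι → M}
    (hφ : ∀ i j, k i = k j → φ i = φ j) (hcard : ∀ c, #{i ∈ s | k i = c} = #{i ∈ t | k i = c}) :
    ∑ i ∈ s, φ i = ∑ i ∈ t, φ i := by
  rw [← sum_fiberwise s k φ, ← sum_fiberwise t k φ]
  refine sum_congr rfl fun c _ => ?_
  obtain hs | ⟨i, hi⟩ := (s.filter (k · = c)).eq_empty_or_nonempty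
  · rw [hs, (card_eq_zero.1 ((hcard c).symm.trans (card_eq_zero.2 hs)))]
  · have hconst : ∀ u : Finset ι, ∑ j ∈ u with k j = c, φ j = #{j ∈ u | k j = c} • φ i := by
      intro u
      rw [← sum_const]
      refine sum_congr rfl fun j hj => hφ j i ?_
      rw [(mem_filter.1 hj).2, (mem_filter.1 hi).2]
    rw [hconst, hconst, hcard]

section Xi

variable {G : Type*} [Fintype G] (R : Type*) [Semiring R]

/-- `ξ(S) = ∑_{x ∈ S} x ∈ R[G]`. -/
noncomputable def xi [Monoid G] (S : Set G) : R[G] := ∑ x, single x (S.indicator 1 x)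

theorem coeff_xi [Monoid G] (S : Set G) (y : G) : (xi R S).coeff y = S.indicator 1 y := by
  classical
  simp [xi, coeff_sum, Finsupp.single_apply]

theorem coeff_xi_pow_char [CommMonoid G] {p : ℕ} [Fact p.Prime] (S : Set G) (y : G) :
    (xi (ZMod p) S ^ p).coeff y = ({x | x ∈ S ∧ x ^ p = y}.ncard : ZMod p) := by
  classical
  have : CharP (ZMod p)[G] p := charP_of_injective_algebraMap' (ZMod p) p
  have hfrob : xi (ZMod p) S ^ p = ∑ x, single (x ^ p) (S.indicator 1 x) := by
    simp only [xi, sum_pow_char, single_pow, ZMod.pow_card]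
  rw [hfrob, coeff_sum, Finset.sum_apply']
  simp only [coeff_single, Finsupp.single_apply, Set.indicator_apply, Pi.one_apply, ← ite_and]
  rw [sum_boole, Set.ncard_eq_toFinset_card', Set.toFinset_ofPred]
  simp only [and_comm]

end Xi

namespace SchurRing

variable {G : Type*} [Group G] (A : SchurRing G)

theorem eq_of_mem_of_mem {W V : Set G} (hW : W ∈ A.parts) (hV : V ∈ A.parts) {g : G}
    (hgW : g ∈ W) (hgV : g ∈ V) : W = V := by
  by_contra hne
  exact (A.disjoint W hW V hV hne).subset ⟨hgW, hgV⟩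

noncomputable def basicSet (g : G) : Set G := (A.cover g).choose

theorem basicSet_eq_iff {g : G} {W : Set G} : A.basicSet g = W ↔ W ∈ A.parts ∧ g ∈ W := by
  obtain ⟨hmem, hg⟩ := (A.cover g).choose_spec
  constructor
  · rintro rfl
    exact ⟨hmem, hg⟩
  · rintro ⟨hW, hgW⟩
    exact A.eq_of_mem_of_mem hmem hW hg hgW

def IsConstOnParts {R : Type*} (f : G → R) : Prop :=
  ∀ Z ∈ A.parts, ∀ z₁ ∈ Z, ∀ z₂ ∈ Z, f z₁ = f z₂

theorem IsConstOnParts.eq_of_basicSet_eq {A : SchurRing G} {R : Type*} {f : G → R}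
    (hf : A.IsConstOnParts f) {a b : G} (hab : A.basicSet a = A.basicSet b) : f a = f b := by
  obtain ⟨hmem, ha⟩ := A.basicSet_eq_iff.1 rfl
  exact hf _ hmem a ha b (A.basicSet_eq_iff.1 hab.symm).2

theorem isASet_setOf {R : Type*} {f : G → R} (hf : A.IsConstOnParts f) (P : R → Prop) :
    A.IsASet {g | P (f g)} := by
  intro g hg
  obtain ⟨Z, hZ, hgZ⟩ := A.cover g
  exact ⟨Z, hZ, hgZ, fun z hz => (congrArg P (hf Z hZ z hz g hgZ)).mpr hg⟩

section GroupAlgebra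

variable [Fintype G] (R : Type*) [Semiring R]

theorem isConstOnParts_coeff_mul {f g : R[G]} (hf : A.IsConstOnParts f.coeff)
    (hg : A.IsConstOnParts g.coeff) :
    A.IsConstOnParts (f * g).coeff := by
  classical
  intro Z hZ z₁ hz₁ z₂ hz₂
  rw [coeff_mul_antidiag f g z₁ {ab | ab.1 * ab.2 = z₁} (by simp),
    coeff_mul_antidiag f g z₂ {ab | ab.1 * ab.2 = z₂} (by simp)]
  refine sum_eq_sum_of_card_fiber_eq (fun ab => (A.basicSet ab.1, A.basicSet ab.2)) ?_ ?_
  · rintro ⟨a, b⟩ ⟨a', b'⟩ h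
    obtain ⟨ha, hb⟩ := Prod.ext_iff.1 h
    rw [hf.eq_of_basicSet_eq ha, hg.eq_of_basicSet_eq hb]
  · rintro ⟨W, V⟩
    simp only [filter_filter, Prod.ext_iff, basicSet_eq_iff]
    by_cases hWV : W ∈ A.parts ∧ V ∈ A.parts
    · have h := A.struct_const W hWV.1 V hWV.2 Z hZ z₁ hz₁ z₂ hz₂
      simp only [← Set.ncard_coe_finset, coe_filter, mem_univ, true_and, hWV.1, hWV.2]
      convert h using 4 <;> exact and_rotate
    · have hempty : ∀ z : G, ({ab ∈ (univ : Finset (G × G)) |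
          ab.1 * ab.2 = z ∧ (W ∈ A.parts ∧ ab.1 ∈ W) ∧ V ∈ A.parts ∧ ab.2 ∈ V}) = ∅ :=
        fun z => filter_eq_empty_iff.2 fun _ _ h => hWV ⟨h.2.1.1, h.2.2.1⟩
      rw [hempty, hempty]

/-- The Schur ring `A` with coefficients in `R`: the elements of `R[G]` whose coefficients are
constant on basic sets. It is closed under multiplication because of `SchurRing.struct_const`. -/
def toSubsemiring : Subsemiring R[G] where
  carrier := {f | A.IsConstOnParts f.coeff}
  mul_mem' := A.isConstOnParts_coeff_mul R
  one_mem' := by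
    classical
    intro Z hZ z₁ hz₁ z₂ hz₂
    have hone : ∀ z ∈ Z, (1 : G) = z ↔ Z = {1} := fun z hz =>
      ⟨fun h => A.eq_of_mem_of_mem hZ A.one_mem (h ▸ hz) rfl,
        fun h => by rw [h] at hz; exact hz.symm⟩
    simp only [one_def, coeff_single, Finsupp.single_apply, hone z₁ hz₁, hone z₂ hz₂]
  add_mem' := fun hf hg Z hZ z₁ hz₁ z₂ hz₂ => by
    simp only [coeff_add, Finsupp.add_apply, hf Z hZ z₁ hz₁ z₂ hz₂, hg Z hZ z₁ hz₁ z₂ hz₂]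
  zero_mem' := fun _ _ _ _ _ _ => rfl

theorem xi_mem_toSubsemiring {X : Set G} (hX : X ∈ A.parts) : xi R X ∈ A.toSubsemiring R := by
  classical
  intro Z hZ z₁ hz₁ z₂ hz₂
  have hiff : ∀ z ∈ Z, z ∈ X ↔ Z = X := fun z hz =>
    ⟨A.eq_of_mem_of_mem hZ hX hz, fun h => h ▸ hz⟩
  simp only [coeff_xi, Set.indicator_apply, Pi.one_apply, hiff z₁ hz₁, hiff z₂ hz₂]

end GroupAlgebra

end SchurRing

section PPower

variable {G : Type*} [CommGroup G]

/-- `X^{[p]} = {x^p : x ∈ X, |xH ∩ X| ≢ 0 (mod p)}` where `H = {g : g^p = 1}`. -/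
def pPowerSet (X : Set G) (p : ℕ) : Set G :=
  {y | ∃ x ∈ X, y = x ^ p ∧ ¬ (p ∣ Set.ncard {z : G | z ∈ X ∧ (x⁻¹ * z) ^ p = 1})}

theorem inv_mul_pow_eq_one_iff {x z : G} {p : ℕ} : (x⁻¹ * z) ^ p = 1 ↔ z ^ p = x ^ p := by
  rw [mul_pow, inv_pow, inv_mul_eq_one, eq_comm]

theorem setOf_coeff_xi_pow_ne_zero [Fintype G] (X : Set G) {p : ℕ} [Fact p.Prime] :
    {y | (xi (ZMod p) X ^ p).coeff y ≠ 0} = pPowerSet X p := by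
  ext y
  simp only [Set.mem_ofPred_eq, coeff_xi_pow_char, pPowerSet, inv_mul_pow_eq_one_iff, ne_eq,
    ZMod.natCast_eq_zero_iff]
  constructor
  · intro hndvd
    obtain ⟨x, hxX, rfl⟩ := Set.nonempty_of_ncard_ne_zero fun h0 => hndvd (h0 ▸ dvd_zero p)
    exact ⟨x, hxX, rfl, hndvd⟩
  · rintro ⟨x, -, rfl, hndvd⟩
    exact hndvd

end PPower

theorem schurRing_pPower_isASet_general {G : Type*} [CommGroup G] [Fintype G]
    (A : SchurRing G) (X : Set G) (hX : X ∈ A.parts)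
    (p : ℕ) (hp : p.Prime) :
    A.IsASet {y : G | ∃ x ∈ X, y = x ^ p ∧
      ¬ (p ∣ Set.ncard {z : G | z ∈ X ∧ (x⁻¹ * z) ^ p = 1})} := by
  have : Fact p.Prime := ⟨hp⟩
  have hpow : xi (ZMod p) X ^ p ∈ A.toSubsemiring (ZMod p) :=
    pow_mem (A.xi_mem_toSubsemiring _ hX) p
  rw [← pPowerSet, ← setOf_coeff_xi_pow_ne_zero]
  exact A.isASet_setOf hpow (· ≠ 0)

/-- Schur–Wielandt: the set `X^{[p]} = {x^p : x ∈ X, |xH ∩ X| ≢ 0 (mod p)}`, with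
`H = {g : g^p = 1}`, is an `A`-set for any basic set `X` and prime `p` dividing `|G|`. -/
theorem schurRing_pPower_isASet {G : Type*} [CommGroup G] [Fintype G]
    (A : SchurRing G) (X : Set G) (hX : X ∈ A.parts)
    (p : ℕ) (hp : p.Prime) (hpG : p ∣ Fintype.card G) :
    A.IsASet {y : G | ∃ x ∈ X, y = x ^ p ∧
      ¬ (p ∣ Set.ncard {z : G | z ∈ X ∧ (x⁻¹ * z) ^ p = 1})} :=
  schurRing_pPower_isASet_general A X hX p hp
end

section
/- Let A, A1, A2 be Schur rings over finite abelian groups G = G1 × G2, G1, G2 respectively. Then A is the tensor product of A1 and A2 if and only if the dual S-ring Â is the tensor product of the dual S-rings Â1 and Â2 (identifying Ĝ with Ĝ1 × Ĝ2). -/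
open Pointwise

/-- The character sum `χ(S) = ∑_{s ∈ S} χ(s)`. -/
noncomputable def charSum {G : Type*} [Group G] (χ : G →* ℂ) (S : Set G) : ℂ :=
  ∑ᶠ s ∈ S, χ s

/-- The partition of the dual group (complex characters of `G`) dual to a family
of subsets of `G`. -/
def dualParts {G : Type*} [Group G] (parts : Set (Set G)) : Set (Set (G →* ℂ)) :=
  Set.range (fun χ₀ : G →* ℂ => {χ : G →* ℂ | ∀ S ∈ parts, charSum χ S = charSum χ₀ S})

/-!
Identify `f : G → ℂ` with `∑ f g • g` in the group algebra, so that an S-ring `A` becomes the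
space of functions constant on its basic sets. The injective transform `f ↦ (χ ↦ ∑ f g * χ g)`
maps this space onto the span of the functions `χ ↦ χ(X)`, `X` basic, which is a unital subalgebra
(the structure constants are constant on basic sets) whose level sets are the basic sets of `Â`.
A unital subalgebra of functions on a finite set contains every function constant on its level
sets, so `f` lies in `A` iff its transform is constant on the basic sets of `Â`: an S-ring is
determined by its dual. Since `χ(X × Y) = χ(X × 1) χ(1 × Y)`, the dual of `A₁ ⊗ A₂` is
`Â₁ ⊗ Â₂`; this is the forward direction, and the converse follows because `A` and `A₁ ⊗ A₂`
then have the same dual.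
-/

lemma Submodule.mul_mem_span_of_forall_mul_mem {R A : Type*} [CommSemiring R] [Semiring A]
    [Algebra R A] {s : Set A} (hs : ∀ a ∈ s, ∀ b ∈ s, a * b ∈ span R s) {x y : A}
    (hx : x ∈ span R s) (hy : y ∈ span R s) : x * y ∈ span R s := by
  have hmul : span R s * span R s ≤ span R s := by
    rw [span_mul_span, span_le]
    rintro _ ⟨a, ha, b, hb, rfl⟩
    exact hs a ha b hb
  exact hmul (mul_mem_mul hx hy)

theorem Subalgebra.mem_of_forall_eq_imp_eq {K T : Type*} [Field K] [Finite T]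
    (S : Subalgebra K (T → K)) {h : T → K}
    (hh : ∀ t t', (∀ f ∈ S, f t = f t') → h t = h t') : h ∈ S := by
  classical
  have := Fintype.ofFinite T
  let R : Setoid T := ⟨fun t t' => ∀ f ∈ S, f t = f t',
    ⟨fun _ _ _ => rfl, fun h f hf => (h f hf).symm, fun h₁ h₂ f hf => (h₁ f hf).trans (h₂ f hf)⟩⟩
  have hsep : ∀ t t', ∃ g ∈ S, g t = 1 ∧ (¬ R t t' → g t' = 0) := by
    intro t t'
    by_cases htt' : R t t'
    · exact ⟨1, S.one_mem, rfl, fun h => (h htt').elim⟩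
    · obtain ⟨f, hf, hne⟩ : ∃ f ∈ S, f t ≠ f t' := by
        by_contra! H
        exact htt' H
      refine ⟨(f t - f t')⁻¹ • (f - algebraMap K _ (f t')), ?_, ?_, fun _ => ?_⟩
      · exact S.smul_mem (S.sub_mem hf (S.algebraMap_mem _)) _
      · simp [inv_mul_cancel₀ (sub_ne_zero.mpr hne)]
      · simp
  choose g hgS hg_self hg_zero using hsep
  have heS : ∀ t, ∏ t', g t t' ∈ S := fun t => prod_mem fun t' _ => hgS t t'
  have he : ∀ t s, (∏ t', g t t') s = if R t s then 1 else 0 := by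
    intro t s
    split_ifs with hts
    · rw [← hts _ (heS t), Finset.prod_apply]
      exact Finset.prod_eq_one fun t' _ => hg_self t t'
    · rw [Finset.prod_apply]
      exact Finset.prod_eq_zero (Finset.mem_univ s) (hg_zero t s hts)
  have hsum : h = ∑ q : Quotient R, h q.out • ∏ t', g q.out t' := by
    funext s
    have hs : R (⟦s⟧ : Quotient R).out s := Quotient.mk_out s
    rw [Finset.sum_apply, Finset.sum_eq_single ⟦s⟧]
    · simp [he, hs, hh _ _ hs]
    · intro q _ hq
      have : ¬ R q.out s := fun hqs => hq (by rw [← Quotient.out_eq q]; exact Quotient.sound hqs)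
      simp [he, this]
    · simp
  rw [hsum]
  exact sum_mem fun q _ => S.smul_mem (heS _) _

lemma charSum_singleton_one {G : Type*} [Group G] (χ : G →* ℂ) : charSum χ {1} = 1 := by
  rw [charSum, finsum_mem_singleton, map_one]

noncomputable def mulFiberCard {G : Type*} [Group G] (X Y : Set G) (z : G) : ℕ :=
  {xy : G × G | xy.1 ∈ X ∧ xy.2 ∈ Y ∧ xy.1 * xy.2 = z}.ncard

def dualClass {G : Type*} [Group G] (P : Set (Set G)) (χ₀ : G →* ℂ) : Set (G →* ℂ) :=
  {χ | ∀ S ∈ P, charSum χ S = charSum χ₀ S}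

lemma charSum_eq_of_dualParts_eq {G : Type*} [Group G] {P Q : Set (Set G)}
    (h : dualParts P = dualParts Q) {χ χ' : G →* ℂ} (hχ : ∀ S ∈ P, charSum χ S = charSum χ' S) :
    ∀ S ∈ Q, charSum χ S = charSum χ' S := by
  obtain ⟨χ₀, hχ₀ : dualClass Q χ₀ = dualClass P χ⟩ : dualClass P χ ∈ dualParts Q :=
    h ▸ ⟨χ, rfl⟩
  have hmem : χ ∈ dualClass Q χ₀ ∧ χ' ∈ dualClass Q χ₀ := by
    rw [hχ₀]
    exact ⟨fun S _ => rfl, fun S hS => (hχ S hS).symm⟩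
  intro S hS
  rw [hmem.1 S hS, hmem.2 S hS]

section Transform

variable {G : Type*} [Group G] [Fintype G]

variable (G) in
noncomputable def charTransform : (G → ℂ) →ₗ[ℂ] (G →* ℂ) → ℂ where
  toFun f χ := ∑ g, f g * χ g
  map_add' f f' := by ext; simp [add_mul, Finset.sum_add_distrib]
  map_smul' c f := by ext; simp [Finset.mul_sum, mul_assoc]

lemma charTransform_apply (f : G → ℂ) (χ : G →* ℂ) :
    charTransform G f χ = ∑ g, f g * χ g := rfl

lemma charSum_eq_sum (χ : G →* ℂ) (S : Set G) [DecidablePred (· ∈ S)] :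
    charSum χ S = ∑ g ∈ S.toFinset, χ g := by
  rw [charSum, finsum_mem_eq_toFinset_sum]

lemma charTransform_indicator (S : Set G) (χ : G →* ℂ) :
    charTransform G (S.indicator 1) χ = charSum χ S := by
  rw [charTransform_apply, charSum, finsum_mem_def, finsum_eq_sum_of_fintype]
  refine Finset.sum_congr rfl fun g _ => ?_
  by_cases hg : g ∈ S <;> simp [hg]

lemma charSum_mul_charSum (X Y : Set G) (χ : G →* ℂ) :
    charSum χ X * charSum χ Y = charTransform G (fun z => (mulFiberCard X Y z : ℂ)) χ := by
  classical
  have hfiber (z : G) : {xy : G × G | xy.1 ∈ X ∧ xy.2 ∈ Y ∧ xy.1 * xy.2 = z} =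
      ↑((X.toFinset ×ˢ Y.toFinset).filter (fun p => p.1 * p.2 = z)) := by
    ext; simp [and_assoc]
  calc charSum χ X * charSum χ Y = ∑ p ∈ X.toFinset ×ˢ Y.toFinset, χ (p.1 * p.2) := by
        simp_rw [charSum_eq_sum, Finset.sum_mul_sum, Finset.sum_product, map_mul]
    _ = ∑ z, ∑ p ∈ (X.toFinset ×ˢ Y.toFinset).filter (fun p => p.1 * p.2 = z), χ z := by
        rw [← Finset.sum_fiberwise_of_maps_to (g := fun p : G × G => p.1 * p.2)
          (fun p _ => Finset.mem_univ _)]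
        refine Finset.sum_congr rfl fun z _ => Finset.sum_congr rfl fun p hp => ?_
        rw [(Finset.mem_filter.mp hp).2]
    _ = charTransform G (fun z => (mulFiberCard X Y z : ℂ)) χ := by
        simp only [charTransform_apply, mulFiberCard, hfiber, Set.ncard_coe_finset,
          Finset.sum_const, nsmul_eq_mul]

end Transform

section Characters

variable {G : Type*} [CommGroup G] [Finite G]

instance : Finite (G →* ℂ) := by
  have : NeZero (Monoid.exponent G) := ⟨Monoid.exponent_ne_zero_of_finite⟩
  exact .of_equiv _ MonoidHom.toHomUnitsMulEquiv.symm.toEquiv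

lemma eq_of_forall_char_eq {g g' : G} (h : ∀ χ : G →* ℂ, χ g = χ g') : g = g' := by
  have : NeZero (Monoid.exponent G) := ⟨Monoid.exponent_ne_zero_of_finite⟩
  exact (CommGroup.forall_apply_eq_apply_iff G).mp fun φ =>
    Units.ext (h ((Units.coeHom ℂ).comp φ))

lemma span_characters : Submodule.span ℂ (Set.range fun χ : G →* ℂ => ⇑χ) = ⊤ := by
  let S := (Submodule.span ℂ (Set.range fun χ : G →* ℂ => ⇑χ)).toSubalgebra
    (Submodule.subset_span ⟨1, rfl⟩) fun _ _ =>
      Submodule.mul_mem_span_of_forall_mul_mem <| by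
        rintro _ ⟨χ, rfl⟩ _ ⟨χ', rfl⟩
        exact Submodule.subset_span ⟨χ * χ', rfl⟩
  refine eq_top_iff.mpr fun h _ => S.mem_of_forall_eq_imp_eq fun t t' htt' => ?_
  rw [eq_of_forall_char_eq fun χ => htt' χ (Submodule.subset_span ⟨χ, rfl⟩)]

end Characters

theorem charTransform_injective {G : Type*} [CommGroup G] [Fintype G] :
    Function.Injective (charTransform G) := by
  classical
  rw [← LinearMap.ker_eq_bot, LinearMap.ker_eq_bot']
  intro f hf
  have hker : Submodule.span ℂ (Set.range fun χ : G →* ℂ => ⇑χ) ≤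
      LinearMap.ker (Fintype.linearCombination ℂ f) := by
    rw [Submodule.span_le]
    rintro _ ⟨χ, rfl⟩
    simpa [Fintype.linearCombination_apply, charTransform_apply, mul_comm] using congrFun hf χ
  funext g
  simpa [Fintype.linearCombination_apply_single] using
    hker (span_characters.ge (Submodule.mem_top (x := Pi.single g 1)))

namespace SchurRing

section Group

variable {G : Type*} [Group G] (A : SchurRing G)

lemma eq_of_mem_of_mem_s5 {X Y : Set G} (hX : X ∈ A.parts) (hY : Y ∈ A.parts) {g : G}
    (hgX : g ∈ X) (hgY : g ∈ Y) : X = Y := by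
  by_contra hXY
  exact (A.disjoint X hX Y hY hXY).subset ⟨hgX, hgY⟩

lemma parts_subset_of_isASet (B : SchurRing G) (hAB : ∀ Z ∈ B.parts, A.IsASet Z)
    (hBA : ∀ Z ∈ A.parts, B.IsASet Z) : A.parts ⊆ B.parts := by
  intro Z hZ
  obtain ⟨z, hz⟩ := A.nonempty Z hZ
  obtain ⟨Y, hY, hzY, hYZ⟩ := hBA Z hZ z hz
  obtain ⟨X, hX, hzX, hXY⟩ := hAB Y hY z hzY
  rw [A.eq_of_mem_of_mem_s5 hX hZ hzX hz] at hXY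
  rwa [hYZ.antisymm hXY] at hY

/-- `A` as a subspace of the group algebra `ℂ[G] ≅ G → ℂ`. -/
def toSubmodule : Submodule ℂ (G → ℂ) where
  carrier := {f | ∀ X ∈ A.parts, ∀ x ∈ X, ∀ y ∈ X, f x = f y}
  add_mem' hf hf' X hX x hx y hy := by simp [hf X hX x hx y hy, hf' X hX x hx y hy]
  zero_mem' _ _ _ _ _ _ := rfl
  smul_mem' c _ hf X hX x hx y hy := by simp [hf X hX x hx y hy]

lemma indicator_mem_toSubmodule {S : Set G} (hS : S ∈ A.parts) :
    S.indicator 1 ∈ A.toSubmodule := by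
  intro X hX x hx y hy
  by_cases hXS : X = S
  · subst hXS
    simp [hx, hy]
  · have hS : ∀ g ∈ X, g ∉ S := fun g hg hgS => hXS (A.eq_of_mem_of_mem_s5 hX hS hg hgS)
    simp [hS x hx, hS y hy]

lemma isASet_of_indicator_mem {S : Set G} (hS : S.indicator 1 ∈ A.toSubmodule) :
    A.IsASet S := by
  intro g hg
  obtain ⟨X, hX, hgX⟩ := A.cover g
  refine ⟨X, hX, hgX, fun x hx => ?_⟩
  have := hS X hX x hx g hgX
  by_contra hxS
  simp [hxS, hg] at this

lemma toSubmodule_eq_span [Finite G] :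
    A.toSubmodule = Submodule.span ℂ ((·.indicator 1) '' A.parts) := by
  classical
  refine le_antisymm (fun f hf => ?_) (Submodule.span_le.mpr ?_)
  · have := (Set.toFinite A.parts).fintype
    choose rep hrep using A.nonempty
    have hf_eq : f = ∑ X : A.parts, f (rep X X.2) • (X : Set G).indicator 1 := by
      funext g
      obtain ⟨X, hX, hgX⟩ := A.cover g
      rw [Finset.sum_apply, Finset.sum_eq_single ⟨X, hX⟩]
      · simp [hgX, hf X hX g hgX _ (hrep X hX)]
      · rintro ⟨Y, hY⟩ _ hYX
        have : g ∉ Y := fun hgY => hYX (Subtype.ext (A.eq_of_mem_of_mem_s5 hY hX hgY hgX))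
        simp [this]
      · simp
    rw [hf_eq]
    exact Submodule.sum_mem _ fun X _ =>
      Submodule.smul_mem _ _ (Submodule.subset_span ⟨X, X.2, rfl⟩)
  · rintro _ ⟨S, hS, rfl⟩
    exact A.indicator_mem_toSubmodule hS

lemma mulFiberCard_mem_toSubmodule {X Y : Set G} (hX : X ∈ A.parts) (hY : Y ∈ A.parts) :
    (fun z => (mulFiberCard X Y z : ℂ)) ∈ A.toSubmodule :=
  fun Z hZ z hz z' hz' => by simp only [mulFiberCard, A.struct_const X hX Y hY Z hZ z hz z' hz']

end Group

section Duality

variable {G : Type*} [CommGroup G] [Fintype G] (A : SchurRing G)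

lemma map_charTransform_toSubmodule :
    A.toSubmodule.map (charTransform G) =
      Submodule.span ℂ ((fun X χ => charSum χ X) '' A.parts) := by
  rw [toSubmodule_eq_span, Submodule.map_span, Set.image_image]
  congr! with X - χ
  exact charTransform_indicator X χ

noncomputable def dualSubalgebra : Subalgebra ℂ ((G →* ℂ) → ℂ) :=
  (Submodule.span ℂ ((fun X χ => charSum χ X) '' A.parts)).toSubalgebra
    (Submodule.subset_span ⟨{1}, A.one_mem, funext charSum_singleton_one⟩) fun _ _ =>
      Submodule.mul_mem_span_of_forall_mul_mem <| by
        rintro _ ⟨X, hX, rfl⟩ _ ⟨Y, hY, rfl⟩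
        rw [← map_charTransform_toSubmodule]
        exact ⟨_, A.mulFiberCard_mem_toSubmodule hX hY,
          funext fun χ => (charSum_mul_charSum X Y χ).symm⟩

theorem mem_toSubmodule_of_charTransform {f : G → ℂ}
    (hf : ∀ χ χ' : G →* ℂ, (∀ S ∈ A.parts, charSum χ S = charSum χ' S) →
      charTransform G f χ = charTransform G f χ') :
    f ∈ A.toSubmodule := by
  have hdual : charTransform G f ∈ A.dualSubalgebra :=
    A.dualSubalgebra.mem_of_forall_eq_imp_eq fun χ χ' hχ => hf χ χ' fun S hS =>
      hχ (charSum · S) (Submodule.subset_span ⟨S, hS, rfl⟩)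
  obtain ⟨f', hf', hff'⟩ : charTransform G f ∈ A.toSubmodule.map (charTransform G) := by
    rwa [map_charTransform_toSubmodule]
  rwa [← charTransform_injective hff']

lemma isASet_of_dualParts_eq (B : SchurRing G) (h : dualParts A.parts = dualParts B.parts)
    {Z : Set G} (hZ : Z ∈ B.parts) : A.IsASet Z := by
  refine A.isASet_of_indicator_mem (A.mem_toSubmodule_of_charTransform fun χ χ' hχ => ?_)
  rw [charTransform_indicator, charTransform_indicator]
  exact charSum_eq_of_dualParts_eq h hχ Z hZ

theorem parts_eq_of_dualParts_eq (B : SchurRing G) (h : dualParts A.parts = dualParts B.parts) :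
    A.parts = B.parts :=
  have hAB := fun _ => A.isASet_of_dualParts_eq B h
  have hBA := fun _ => B.isASet_of_dualParts_eq A h.symm
  (A.parts_subset_of_isASet B hAB hBA).antisymm (B.parts_subset_of_isASet A hBA hAB)

end Duality

end SchurRing

section Tensor

variable {G₁ G₂ : Type*} [Group G₁] [Group G₂]

lemma mulFiberCard_prod (X₁ Y₁ : Set G₁) (X₂ Y₂ : Set G₂) (z : G₁ × G₂) :
    mulFiberCard (X₁ ×ˢ X₂) (Y₁ ×ˢ Y₂) z = mulFiberCard X₁ Y₁ z.1 * mulFiberCard X₂ Y₂ z.2 := by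
  rw [mulFiberCard, mulFiberCard, mulFiberCard, ← Set.ncard_prod,
    ← Set.ncard_image_of_injective _ (Equiv.prodProdProdComm G₁ G₂ G₁ G₂).injective]
  congr 1
  rw [Equiv.image_eq_preimage_symm]
  ext ⟨⟨x₁, x₂⟩, y₁, y₂⟩
  simp only [Set.mem_preimage, Equiv.prodProdProdComm_symm, Equiv.prodProdProdComm_apply,
    Set.mem_prod, Set.mem_ofPred_eq, Prod.ext_iff, Prod.fst_mul, Prod.snd_mul]
  tauto

namespace SchurRing

def tensor (A₁ : SchurRing G₁) (A₂ : SchurRing G₂) : SchurRing (G₁ × G₂) where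
  parts := {Z | ∃ X ∈ A₁.parts, ∃ Y ∈ A₂.parts, Z = X ×ˢ Y}
  nonempty := by
    rintro _ ⟨X, hX, Y, hY, rfl⟩
    exact (A₁.nonempty X hX).prod (A₂.nonempty Y hY)
  cover g := by
    obtain ⟨X, hX, hgX⟩ := A₁.cover g.1
    obtain ⟨Y, hY, hgY⟩ := A₂.cover g.2
    exact ⟨X ×ˢ Y, ⟨X, hX, Y, hY, rfl⟩, hgX, hgY⟩
  disjoint := by
    rintro _ ⟨X, hX, Y, hY, rfl⟩ _ ⟨X', hX', Y', hY', rfl⟩ hne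
    refine Set.eq_empty_of_forall_notMem fun g ⟨⟨hgX, hgY⟩, hgX', hgY'⟩ => hne ?_
    rw [A₁.eq_of_mem_of_mem_s5 hX hX' hgX hgX', A₂.eq_of_mem_of_mem_s5 hY hY' hgY hgY']
  one_mem := ⟨{1}, A₁.one_mem, {1}, A₂.one_mem, Set.singleton_prod_singleton.symm⟩
  inv_closed := by
    rintro _ ⟨X, hX, Y, hY, rfl⟩
    exact ⟨X⁻¹, A₁.inv_closed X hX, Y⁻¹, A₂.inv_closed Y hY, Set.inv_prod X Y⟩
  struct_const := by
    rintro _ ⟨X₁, hX₁, X₂, hX₂, rfl⟩ _ ⟨Y₁, hY₁, Y₂, hY₂, rfl⟩ _ ⟨Z₁, hZ₁, Z₂, hZ₂, rfl⟩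
      z hz z' hz'
    change mulFiberCard _ _ z = mulFiberCard _ _ z'
    rw [mulFiberCard_prod, mulFiberCard_prod]
    exact congrArg₂ (· * ·) (A₁.struct_const X₁ hX₁ Y₁ hY₁ Z₁ hZ₁ z.1 hz.1 z'.1 hz'.1)
      (A₂.struct_const X₂ hX₂ Y₂ hY₂ Z₂ hZ₂ z.2 hz.2 z'.2 hz'.2)

end SchurRing

lemma charSum_prod [Fintype G₁] [Fintype G₂] (χ : G₁ × G₂ →* ℂ) (X : Set G₁) (Y : Set G₂) :
    charSum χ (X ×ˢ Y) =
      charSum (χ.comp (MonoidHom.inl G₁ G₂)) X * charSum (χ.comp (MonoidHom.inr G₁ G₂)) Y := by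
  classical
  rw [charSum_eq_sum, charSum_eq_sum, charSum_eq_sum, Set.toFinset_prod, Finset.sum_mul_sum,
    Finset.sum_product]
  refine Finset.sum_congr rfl fun x _ => Finset.sum_congr rfl fun y _ => ?_
  simp [← map_mul]

lemma mem_image_coprod_iff {C₁ : Set (G₁ →* ℂ)} {C₂ : Set (G₂ →* ℂ)} {χ : G₁ × G₂ →* ℂ} :
    χ ∈ (fun p : (G₁ →* ℂ) × (G₂ →* ℂ) => p.1.coprod p.2) '' C₁ ×ˢ C₂ ↔
      χ.comp (MonoidHom.inl G₁ G₂) ∈ C₁ ∧ χ.comp (MonoidHom.inr G₁ G₂) ∈ C₂ := by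
  constructor
  · rintro ⟨⟨χ₁, χ₂⟩, ⟨h₁, h₂⟩, rfl⟩
    simpa using And.intro h₁ h₂
  · rintro ⟨h₁, h₂⟩
    exact ⟨(_, _), ⟨h₁, h₂⟩, χ.coprod_unique⟩

variable [Fintype G₁] [Fintype G₂] (A₁ : SchurRing G₁) (A₂ : SchurRing G₂)

lemma dualClass_tensor (χ₀ : G₁ × G₂ →* ℂ) :
    dualClass (A₁.tensor A₂).parts χ₀ = (fun p : (G₁ →* ℂ) × (G₂ →* ℂ) => p.1.coprod p.2) ''
      dualClass A₁.parts (χ₀.comp (MonoidHom.inl G₁ G₂)) ×ˢ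
        dualClass A₂.parts (χ₀.comp (MonoidHom.inr G₁ G₂)) := by
  ext χ
  rw [mem_image_coprod_iff]
  constructor
  · intro h
    refine ⟨fun X hX => ?_, fun Y hY => ?_⟩
    · simpa [charSum_prod, charSum_singleton_one] using h _ ⟨X, hX, {1}, A₂.one_mem, rfl⟩
    · simpa [charSum_prod, charSum_singleton_one] using h _ ⟨{1}, A₁.one_mem, Y, hY, rfl⟩
  · rintro ⟨h₁, h₂⟩ _ ⟨X, hX, Y, hY, rfl⟩
    rw [charSum_prod, charSum_prod, h₁ X hX, h₂ Y hY]

theorem dualParts_tensor :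
    dualParts (A₁.tensor A₂).parts =
      {D | ∃ C₁ ∈ dualParts A₁.parts, ∃ C₂ ∈ dualParts A₂.parts,
        D = (fun p : (G₁ →* ℂ) × (G₂ →* ℂ) => p.1.coprod p.2) '' C₁ ×ˢ C₂} := by
  ext D
  constructor
  · rintro ⟨χ₀, rfl⟩
    exact ⟨_, ⟨_, rfl⟩, _, ⟨_, rfl⟩, dualClass_tensor A₁ A₂ χ₀⟩
  · rintro ⟨_, ⟨χ₁, rfl⟩, _, ⟨χ₂, rfl⟩, rfl⟩
    refine ⟨χ₁.coprod χ₂, ?_⟩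
    change dualClass _ _ = _
    rw [dualClass_tensor, MonoidHom.coprod_comp_inl, MonoidHom.coprod_comp_inr]
    rfl

end Tensor

/-- `A` over `G₁ × G₂` is the tensor product of `A₁` and `A₂` iff the dual of `A`
is the tensor product of the duals of `A₁` and `A₂` (under the identification of
the dual of `G₁ × G₂` with the product of the duals). -/
theorem tensor_iff_dual_tensor {G₁ G₂ : Type*} [CommGroup G₁] [CommGroup G₂]
    [Fintype G₁] [Fintype G₂]
    (A : SchurRing (G₁ × G₂)) (A₁ : SchurRing G₁) (A₂ : SchurRing G₂) :
    (A.parts = {Z : Set (G₁ × G₂) | ∃ X ∈ A₁.parts, ∃ Y ∈ A₂.parts, Z = X ×ˢ Y}) ↔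
    (dualParts A.parts =
      {D : Set ((G₁ × G₂) →* ℂ) | ∃ C₁ ∈ dualParts A₁.parts, ∃ C₂ ∈ dualParts A₂.parts,
        D = (fun χp : (G₁ →* ℂ) × (G₂ →* ℂ) =>
              (χp.1.comp (MonoidHom.fst G₁ G₂)) * (χp.2.comp (MonoidHom.snd G₁ G₂))) ''
            (C₁ ×ˢ C₂)}) := by
  refine ⟨fun h => ?_, fun h => A.parts_eq_of_dualParts_eq (A₁.tensor A₂) ?_⟩
  · rw [h]
    exact dualParts_tensor A₁ A₂
  · exact h.trans (dualParts_tensor A₁ A₂).symm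
end
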